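/- Let G be a connected finite simple graph with a split between A and B, let τ be a circle representation of G with induced subwords γ_1, …, γ_{2k}, let ∼ be the equivalence relation on A ∪ B generated by conditions (C1) and (C2), and let Φ be an equivalence class of ∼ whose vertices occur in γ_j. Then the occurrences of the vertices of Φ form a contiguous subword of γ_j; that is, no symbol of γ_j that does not belong to Φ lies between two symbols of Φ in γ_j. -/

import Mathlib

/-- The segment of the word `τ` strictly between the two occurrences of `u`. -/
def betweenOccs {V : Type*} [DecidableEq V] (τ : List V) (u : V) : List V :=
  ((τ.dropWhile (fun x => decide (x ≠ u))).drop 1).takeWhile (fun x => decide (x ≠ u))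

/-- Two symbols `u` and `v` alternate in the circular word `τ` (i.e. their four
occurrences appear in cyclic order `u, v, u, v`): exactly one of the two
occurrences of `v` lies strictly between the two occurrences of `u`. -/
def Alternates {V : Type*} [DecidableEq V] (τ : List V) (u v : V) : Prop :=
  (betweenOccs τ u).count v = 1

/-- `τ` is a circle representation of `G`: a circular word (modelled as a list read
cyclically) in which every vertex occurs exactly twice, and two distinct vertices are
adjacent iff their occurrences alternate. -/
def IsCircleRep {V : Type*} [DecidableEq V] (G : SimpleGraph V) (τ : List V) : Prop :=
  (∀ v : V, τ.count v = 2) ∧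
  ∀ u v : V, u ≠ v → (G.Adj u v ↔ Alternates τ u v)

/-- A split of `G` between `A` and `B`, with short sides `SA = 𝔰(A)` and `SB = 𝔰(B)`:
a partition of the vertices into four parts such that every vertex of `A` is adjacent
to every vertex of `B`, there are no edges between `SA` and `B ∪ SB` nor between
`SB` and `A ∪ SA`, and both sides have at least two vertices. -/
def IsSplit {V : Type*} [DecidableEq V] (G : SimpleGraph V) (A B SA SB : Finset V) : Prop :=
  (∀ v : V, v ∈ A ∪ B ∪ SA ∪ SB) ∧
  Disjoint A B ∧ Disjoint A SA ∧ Disjoint A SB ∧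
  Disjoint B SA ∧ Disjoint B SB ∧ Disjoint SA SB ∧
  (∀ a ∈ A, ∀ b ∈ B, G.Adj a b) ∧
  (∀ s ∈ SA, ∀ x ∈ B ∪ SB, ¬ G.Adj s x) ∧
  (∀ s ∈ SB, ∀ x ∈ A ∪ SA, ¬ G.Adj s x) ∧
  2 ≤ (A ∪ SA).card ∧ 2 ≤ (B ∪ SB).card

/-- The base relation `∼` on `A ∪ B`: `x ∼ y` if `x` and `y` are distinct
non-adjacent vertices of `A ∪ B` (condition (C1)), or if `x` and `y` are connected
by a path with at least one internal vertex, all of whose internal vertices lie in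
`SA ∪ SB = 𝔰(A) ∪ 𝔰(B)` (condition (C2)). -/
def SplitRel {V : Type*} [DecidableEq V] (G : SimpleGraph V) (A B SA SB : Finset V)
    (x y : V) : Prop :=
  x ∈ A ∪ B ∧ y ∈ A ∪ B ∧
  ((x ≠ y ∧ ¬ G.Adj x y) ∨
    ∃ p : G.Walk x y, p.IsPath ∧ 2 ≤ p.length ∧
      ∀ w ∈ p.support, w ≠ x → w ≠ y → w ∈ SA ∪ SB)

/-- `Φ` is an equivalence class of the equivalence relation on `A ∪ B` generated by
the conditions (C1) and (C2). -/
def IsClass {V : Type*} [DecidableEq V] (G : SimpleGraph V) (A B SA SB : Finset V)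
    (Φ : Set V) : Prop :=
  ∃ x, x ∈ A ∪ B ∧
    Φ = {y | y ∈ A ∪ B ∧ Relation.EqvGen (SplitRel G A B SA SB) x y}

/-!
Suppose `z` lies between `x, y ∈ Φ` in an `A`-block `γ j` but `z ∉ Φ`. A vertex occurs at most
once in a block, since it is adjacent to the first letter `b₁` of the next block; and `z` is
adjacent to every vertex of `Φ`, since otherwise (C1) puts `z` into `Φ`. Reading `τ` from `z` as
`z R b₁ C z D b₂ L`, where `b₁` and `b₂` are the letters of `A ∪ B` right after and right before
`γ j`, a vertex `u ∈ Φ` before `z` in `γ j` occurs in `L` and `C`, and a vertex `v ∈ Φ` after `z`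
occurs in `R` and `D`. Such `u` and `v` cross, so (C1) does not relate them. Nor does (C2): the
interior of a path from `u` to `v` through `𝔰(A) ∪ 𝔰(B)` lies in `𝔰(A)`, so it crosses neither
`b₁` nor `b₂`, nor `z` (else `z ∼ v`); being connected, it stays inside one of the arcs
`R, C, D, L`, and none of them holds occurrences of both `u` and `v`. Hence `∼` never links the
two sides of `z` in `γ j`, contradicting `x ∼ y`.
-/

namespace List

variable {α : Type*}

theorem exists_eq_append_cons_append_cons [DecidableEq α] {a : α} {l : List α}
    (h : 2 ≤ l.count a) : ∃ l₀ l₁ l₂, l = l₀ ++ a :: l₁ ++ a :: l₂ := by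
  obtain ⟨s, t, rfl⟩ := mem_iff_append.1 (count_pos_iff.1 (show 0 < l.count a by omega))
  rw [count_append, count_cons_self] at h
  by_cases ht : a ∈ t
  · obtain ⟨t₀, t₁, rfl⟩ := mem_iff_append.1 ht
    exact ⟨s, t₀, t₁, by simp⟩
  · rw [count_eq_zero.2 ht] at h
    obtain ⟨s₀, s₁, rfl⟩ := mem_iff_append.1 (count_pos_iff.1 (show 0 < s.count a by omega))
    exact ⟨s₀, s₁, t, by simp⟩

theorem exists_eq_append_cons_of_filter_eq {p : α → Bool} {l L₀ L₁ : List α} {a : α}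
    (h : l.filter p = L₀ ++ a :: L₁) :
    ∃ t₀ t₁, l = t₀ ++ a :: t₁ ∧ t₀.filter p = L₀ ∧ t₁.filter p = L₁ := by
  obtain ⟨u₀, u₁, rfl, hu₀, hu₁⟩ := filter_eq_append_iff.1 h
  obtain ⟨w₀, w₁, rfl, hw₀, -, hw₁⟩ := filter_eq_cons_iff.1 hu₁
  refine ⟨u₀ ++ w₀, w₁, by simp, ?_, hw₁⟩
  rw [filter_append, hu₀, filter_eq_nil_iff.2 hw₀, append_nil]

theorem exists_cons_isRotated_of_isRotated_filter {p : α → Bool} {l X : List α} {a : α}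
    (h : (a :: X) ~r l.filter p) : ∃ Y, (a :: Y) ~r l ∧ Y.filter p = X := by
  obtain ⟨n, hn, hrot⟩ := isRotated_iff_mod.1 h.symm
  rw [rotate_eq_drop_append_take hn] at hrot
  obtain ⟨l₁, l₂, rfl, h₁, h₂⟩ :=
    filter_eq_append_iff.1 (take_append_drop n (l.filter p)).symm
  obtain ⟨t₀, t₁, ht, ht₀, ht₁⟩ := exists_eq_append_cons_of_filter_eq (L₀ := [])
    (by rw [filter_append, h₁, h₂, hrot, nil_append] : (l₂ ++ l₁).filter p = [] ++ a :: X)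
  refine ⟨t₁ ++ t₀, ?_, by rw [filter_append, ht₀, ht₁, append_nil]⟩
  have hY : (a :: (t₁ ++ t₀)) ~r (t₀ ++ a :: t₁) := by
    simpa using (isRotated_append (l := t₀) (l' := a :: t₁)).symm
  exact hY.trans (ht ▸ isRotated_append)

theorem exists_regions_of_isRotated_filter {p : α → Bool} {l R' C' D' L' : List α} {z b₁ b₂ : α}
    (h : (z :: R' ++ b₁ :: C' ++ z :: D' ++ b₂ :: L') ~r l.filter p) :
    ∃ R C D L, (z :: R ++ b₁ :: C ++ z :: D ++ b₂ :: L) ~r l ∧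
      R.filter p = R' ∧ C.filter p = C' ∧ D.filter p = D' ∧ L.filter p = L' := by
  obtain ⟨Y, hY, hYf⟩ := exists_cons_isRotated_of_isRotated_filter
    (by simpa only [cons_append, append_assoc] using h)
  obtain ⟨R, Y₁, rfl, hR, hY₁⟩ := exists_eq_append_cons_of_filter_eq hYf
  obtain ⟨C, Y₂, rfl, hC, hY₂⟩ := exists_eq_append_cons_of_filter_eq hY₁
  obtain ⟨D, L, rfl, hD, hL⟩ := exists_eq_append_cons_of_filter_eq hY₂
  exact ⟨R, C, D, L, by simpa using hY, hR, hC, hD, hL⟩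

theorem flatten_map_range_isRotated (γ : ℕ → List α) (n j : ℕ) :
    ((range n).map γ).flatten ~r ((range n).map fun i => γ ((j + i) % n)).flatten := by
  induction j with
  | zero =>
    have h : ((range n).map fun i => γ ((0 + i) % n)) = (range n).map γ :=
      map_congr_left fun i hi => by rw [zero_add, Nat.mod_eq_of_lt (mem_range.1 hi)]
    rw [h]
  | succ j ih =>
    refine ih.trans ?_
    rcases n with _ | m
    · simp
    have hlast : (j + 1 + m) % (m + 1) = (j + 0) % (m + 1) := by
      rw [show j + 1 + m = j + 0 + (m + 1) by omega, Nat.add_mod_right]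
    conv_lhs => rw [range_succ_eq_map]
    conv_rhs => rw [range_succ]
    have hshift : ((fun i => γ ((j + i) % (m + 1))) ∘ Nat.succ) =
        fun i => γ ((j + 1 + i) % (m + 1)) := funext fun i => by
      simp [Nat.add_assoc, Nat.add_comm 1 i]
    simp only [map_cons, map_map, flatten_cons, map_append, flatten_append, hlast, hshift]
    simpa using isRotated_append

theorem exists_isRotated_flatten_map_range (γ : ℕ → List α) {n j : ℕ} (hn : 2 ≤ n) (hj : j < n)
    (hne : ∀ i < n, γ i ≠ []) : ∃ b₁ b₂ N N', ((range n).map γ).flatten ~r γ j ++ b₁ :: N ∧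
      b₁ :: N = N' ++ [b₂] ∧ b₁ ∈ γ ((j + 1) % n) ∧ b₂ ∈ γ ((j + (n - 1)) % n) := by
  obtain ⟨m, rfl⟩ : ∃ m, n = m + 2 := ⟨n - 2, by omega⟩
  set N := ((range (m + 1)).map fun i => γ ((j + (i + 1)) % (m + 2))).flatten with hN
  have hrot : ((range (m + 2)).map γ).flatten ~r γ j ++ N := by
    have h : ((range (m + 2)).map fun i => γ ((j + i) % (m + 2))).flatten = γ j ++ N := by
      rw [range_succ_eq_map]
      simp [Nat.mod_eq_of_lt hj, hN, Function.comp_def]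
    exact h ▸ flatten_map_range_isRotated γ (m + 2) j
  obtain ⟨b₁, C, hC⟩ := exists_cons_of_ne_nil (hne ((j + 1) % (m + 2)) (Nat.mod_lt _ (by omega)))
  obtain ⟨D, b₂, hD⟩ := (eq_nil_or_concat (γ ((j + (m + 1)) % (m + 2)))).resolve_left
    (hne _ (Nat.mod_lt _ (by omega)))
  have hhead : N = b₁ :: (C ++ ((range m).map fun i => γ ((j + (i + 2)) % (m + 2))).flatten) := by
    rw [hN, range_succ_eq_map]
    simp [hC, Function.comp_def]
  have hlast : N = ((range m).map fun i => γ ((j + (i + 1)) % (m + 2))).flatten ++ D ++ [b₂] := by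
    rw [hN, range_succ]
    simp [hD]
  refine ⟨b₁, b₂, _, _, hhead ▸ hrot, hhead ▸ hlast, by simp [hC], by simp [hD]⟩

end List

section CircleRep

variable {V : Type*} [DecidableEq V]

theorem betweenOccs_append_cons_append_cons {a : V} {l₀ l₁ l₂ : List V}
    (h₀ : a ∉ l₀) (h₁ : a ∉ l₁) : betweenOccs (l₀ ++ a :: l₁ ++ a :: l₂) a = l₁ := by
  have hne : ∀ l : List V, a ∉ l → ∀ x ∈ l, decide (x ≠ a) = true := fun l hl x hx =>
    decide_eq_true fun hxa => hl (hxa ▸ hx)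
  rw [betweenOccs, List.append_assoc, List.dropWhile_append_of_pos (hne l₀ h₀)]
  simp only [ne_eq, List.cons_append, List.dropWhile_cons, not_true_eq_false, decide_false,
    Bool.false_eq_true, if_false, List.drop_one, List.tail_cons]
  rw [List.takeWhile_append_of_pos (hne l₁ h₁)]
  simp

theorem alternates_append_cons_append_cons_iff {u v : V} {X₀ X₁ X₂ : List V}
    (h : (X₀ ++ u :: X₁ ++ u :: X₂).count u = 2) :
    Alternates (X₀ ++ u :: X₁ ++ u :: X₂) u v ↔ X₁.count v = 1 := by
  simp only [List.count_append, List.count_cons_self] at h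
  rw [Alternates, betweenOccs_append_cons_append_cons (List.count_eq_zero.1 (by omega))
    (List.count_eq_zero.1 (by omega))]

theorem alternates_filter_iff {p : V → Bool} {τ : List V} {u v : V} (hu : p u) (hv : p v)
    (h : τ.count u = 2) : Alternates (τ.filter p) u v ↔ Alternates τ u v := by
  obtain ⟨X₀, X₁, X₂, rfl⟩ := List.exists_eq_append_cons_append_cons h.ge
  have hf : (X₀ ++ u :: X₁ ++ u :: X₂).filter p =
      X₀.filter p ++ u :: X₁.filter p ++ u :: X₂.filter p := by
    simp [List.filter_append, List.filter_cons_of_pos hu]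
  rw [hf, alternates_append_cons_append_cons_iff (by rwa [← hf, List.count_filter hu]),
    alternates_append_cons_append_cons_iff h, List.count_filter hv]

theorem alternates_cons_iff_alternates_concat {a u v : V} {W : List V} (huv : u ≠ v)
    (hu : (a :: W).count u = 2) (hv : (a :: W).count v = 2) :
    Alternates (a :: W) u v ↔ Alternates (W ++ [a]) u v := by
  have hu' : (W ++ [a]).count u = 2 := ((List.perm_append_singleton a W).count_eq u).trans hu
  obtain ⟨X₀, X₁, X₂, hW⟩ := List.exists_eq_append_cons_append_cons hu.ge
  rw [hW] at hu hv
  rw [hW, alternates_append_cons_append_cons_iff hu]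
  rcases X₀ with _ | ⟨b, X₀⟩
  · obtain ⟨rfl, rfl⟩ : u = a ∧ W = X₁ ++ u :: X₂ := by simpa [eq_comm] using hW
    rw [alternates_append_cons_append_cons_iff hu']
    simp only [List.count_append, List.count_cons, List.nil_append, beq_iff_eq,
      if_neg huv] at hv
    omega
  · obtain ⟨rfl, rfl⟩ : a = b ∧ W = X₀ ++ u :: X₁ ++ u :: X₂ := by simpa using hW
    rw [show X₀ ++ u :: X₁ ++ u :: X₂ ++ [a] = X₀ ++ u :: X₁ ++ u :: (X₂ ++ [a]) by simp]
      at hu' ⊢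
    rw [alternates_append_cons_append_cons_iff hu']

theorem List.IsRotated.alternates_iff {W W' : List V} {u v : V} (h : W ~r W') (huv : u ≠ v)
    (hu : W.count u = 2) (hv : W.count v = 2) : Alternates W u v ↔ Alternates W' u v := by
  obtain ⟨n, rfl⟩ := h
  induction n generalizing W with
  | zero => simp
  | succ n ih =>
    rcases W with _ | ⟨a, W⟩
    · simp
    have hperm := List.perm_append_singleton a W
    rw [List.rotate_cons_succ, ← ih (hperm.count_eq u ▸ hu) (hperm.count_eq v ▸ hv)]
    exact alternates_cons_iff_alternates_concat huv hu hv

end CircleRep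

namespace IsCircleRep

variable {V : Type*} [DecidableEq V] {G : SimpleGraph V} {τ : List V}

theorem adj_iff_count_eq_one_of_filter (hτ : IsCircleRep G τ) {p : V → Bool}
    {X₀ X₁ X₂ : List V} {u v : V} (hW : (X₀ ++ u :: X₁ ++ u :: X₂) ~r τ.filter p)
    (hu : p u) (hv : p v) (huv : u ≠ v) : G.Adj u v ↔ X₁.count v = 1 := by
  have hcount : ∀ w, p w → (X₀ ++ u :: X₁ ++ u :: X₂).count w = 2 := fun w hw => by
    rw [hW.perm.count_eq, List.count_filter hw, hτ.1]
  rw [hτ.2 u v huv, ← alternates_filter_iff hu hv (hτ.1 u),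
    ← hW.alternates_iff huv (hcount u hu) (hcount v hv),
    alternates_append_cons_append_cons_iff (hcount u hu)]

theorem adj_iff_count_eq_one (hτ : IsCircleRep G τ) {X₀ X₁ X₂ : List V} {u v : V}
    (hW : (X₀ ++ u :: X₁ ++ u :: X₂) ~r τ) (huv : u ≠ v) : G.Adj u v ↔ X₁.count v = 1 :=
  hτ.adj_iff_count_eq_one_of_filter (p := fun _ => true) (by rwa [List.filter_true]) rfl rfl huv

theorem count_eq_two_of_isRotated (hτ : IsCircleRep G τ) {W : List V} (hW : W ~r τ) (w : V) :
    W.count w = 2 :=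
  hW.perm.count_eq w ▸ hτ.1 w

theorem count_le_one_of_forall_adj (hτ : IsCircleRep G τ) {p : V → Bool} {γ N : List V}
    {b : V} (hF : (γ ++ b :: N) ~r τ.filter p) (hadj : ∀ a ∈ γ, G.Adj a b) (w : V) :
    γ.count w ≤ 1 := by
  by_contra! h
  obtain ⟨m₀, m₁, m₂, rfl⟩ := List.exists_eq_append_cons_append_cons h
  have hp : ∀ a ∈ m₀ ++ w :: m₁ ++ w :: m₂ ++ b :: N, p a := fun a ha =>
    (List.mem_filter.1 (hF.perm.subset ha)).2
  have hwb := hadj w (by simp)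
  have hbm₁ : m₁.count b = 0 :=
    List.count_eq_zero.2 fun hb => (hadj b (by simp [hb])).ne rfl
  have := (hτ.adj_iff_count_eq_one_of_filter (X₂ := m₂ ++ b :: N) (by simpa using hF)
    (hp w (by simp)) (hp b (by simp)) hwb.ne).1 hwb
  omega

theorem count_pos_of_adj (hτ : IsCircleRep G τ) {X K Y : List V} (hW : (X ++ K ++ Y) ~r τ)
    {a b : V} (ha : K.count a = 2) (hab : G.Adj a b) : 0 < K.count b := by
  obtain ⟨k₀, k₁, k₂, rfl⟩ := List.exists_eq_append_cons_append_cons ha.ge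
  have := (hτ.adj_iff_count_eq_one (X₀ := X ++ k₀) (X₂ := k₂ ++ Y) (by simpa using hW)
    hab.ne).1 hab
  simp only [List.count_append, List.count_cons]
  omega

theorem adj_of_interleaved (hτ : IsCircleRep G τ) {X₁ X₂ X₃ X₄ : List V}
    (hW : (X₁ ++ X₂ ++ X₃ ++ X₄) ~r τ) {u v : V} (huv : u ≠ v) (hu₁ : X₁.count u = 1)
    (hu₃ : X₃.count u = 1) (hv₂ : X₂.count v = 1) (hv₄ : X₄.count v = 1) : G.Adj u v := by
  obtain ⟨a, b, rfl⟩ := List.mem_iff_append.1 (List.count_pos_iff.1 (hu₁ ▸ one_pos))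
  obtain ⟨c, d, rfl⟩ := List.mem_iff_append.1 (List.count_pos_iff.1 (hu₃ ▸ one_pos))
  have htot := hτ.count_eq_two_of_isRotated hW v
  rw [hτ.adj_iff_count_eq_one (X₀ := a) (X₁ := b ++ X₂ ++ c) (X₂ := d ++ X₄)
    (by simpa using hW) huv]
  simp only [List.count_append, List.count_cons, beq_iff_eq, if_neg huv] at htot hu₁ hu₃ ⊢
  omega

/- Not crossing `z` keeps both ends of `w` on one side of `z`; the chord `b₁` (whose other end
lies in `D b₂ L`) separates `R` from `C`, and the chord `b₂` separates `D` from `L`. -/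
theorem count_eq_two_of_not_adj (hτ : IsCircleRep G τ) {z b₁ b₂ w : V} {R C D L : List V}
    (hW : (z :: R ++ b₁ :: C ++ z :: D ++ b₂ :: L) ~r τ) (hb₁ : G.Adj z b₁) (hb₂ : G.Adj z b₂)
    (hwz : w ≠ z) (hzw : ¬ G.Adj z w) (hb₁w : ¬ G.Adj b₁ w) (hb₂w : ¬ G.Adj b₂ w) :
    R.count w = 2 ∨ C.count w = 2 ∨ D.count w = 2 ∨ L.count w = 2 := by
  have hwb₁ : w ≠ b₁ := by rintro rfl; exact hzw hb₁
  have hwb₂ : w ≠ b₂ := by rintro rfl; exact hzw hb₂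
  have hz : ∀ x, z ≠ x → (G.Adj z x ↔ (R ++ b₁ :: C).count x = 1) := fun x hx =>
    hτ.adj_iff_count_eq_one (X₀ := []) (X₂ := D ++ b₂ :: L) (by simpa using hW) hx
  have htot := hτ.count_eq_two_of_isRotated hW
  have hzb₁ := (hz b₁ hb₁.ne).1 hb₁
  obtain ⟨E₀, E₁, hE⟩ := List.mem_iff_append.1 (List.count_pos_iff.1
    (show 0 < (D ++ b₂ :: L).count b₁ by
      have := htot b₁
      simp only [List.count_append, List.count_cons] at this hzb₁ ⊢
      omega))
  obtain ⟨H₀, H₁, hH⟩ := List.mem_iff_append.1 (List.count_pos_iff.1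
    (show 0 < (R ++ b₁ :: C).count b₂ by rw [(hz b₂ hb₂.ne).1 hb₂]; exact one_pos))
  have hz' : (R ++ b₁ :: C).count w ≠ 1 := fun h => hzw ((hz w hwz.symm).2 h)
  have hb₁' : (C ++ z :: E₀).count w ≠ 1 := fun h => hb₁w
    ((hτ.adj_iff_count_eq_one (X₀ := z :: R) (X₂ := E₁) (by simpa [hE] using hW)
      hwb₁.symm).2 h)
  have hb₂' : (H₁ ++ z :: D).count w ≠ 1 := fun h => hb₂w
    ((hτ.adj_iff_count_eq_one (X₀ := z :: H₀) (X₂ := L)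
      (by simpa [hH] using hW) hwb₂.symm).2 h)
  have hE' := congrArg (List.count w) hE
  have hH' := congrArg (List.count w) hH
  have htotw := htot w
  simp only [List.count_append, List.count_cons, beq_iff_eq, if_neg hwz.symm,
    if_neg hwb₁.symm, if_neg hwb₂.symm] at hz' hb₁' hb₂' hE' hH' htotw
  omega

end IsCircleRep

namespace SimpleGraph.Walk

variable {V : Type*} {G : SimpleGraph V} {u v : V}

theorem IsPath.getVert_mem {p : G.Walk u v} (hp : p.IsPath) {P : V → Prop}
    (hP : ∀ w ∈ p.support, w ≠ u → w ≠ v → P w) {i : ℕ} (hi₀ : 0 < i) (hi : i < p.length) :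
    P (p.getVert i) :=
  hP _ (p.getVert_mem_support i) (by rw [Ne, hp.getVert_eq_start_iff hi.le]; omega)
    (by rw [Ne, hp.getVert_eq_end_iff hi.le]; omega)

theorem getVert_mem_of_not_adj [DecidableEq V] {p : G.Walk u v} {A S T : Finset V}
    (hu : u ∈ A) (hT : ∀ t ∈ T, ∀ x ∈ A ∪ S, ¬ G.Adj t x)
    (hint : ∀ i, 0 < i → i < p.length → p.getVert i ∈ S ∪ T) :
    ∀ i, 0 < i → i < p.length → p.getVert i ∈ S := by
  intro i hi₀ hi
  induction i with
  | zero => omega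
  | succ i ih =>
    refine (Finset.mem_union.1 (hint _ hi₀ hi)).resolve_right fun ht => hT _ ht _ ?_
      (p.adj_getVert_succ (by omega)).symm
    rcases Nat.eq_zero_or_pos i with rfl | hi'
    · exact Finset.mem_union_left _ (by rwa [p.getVert_zero])
    · exact Finset.mem_union_right _ (ih hi' (by omega))

theorem IsPath.exists_isPath_of_adj_getVert {p : G.Walk u v} (hp : p.IsPath) {P : V → Prop}
    (hint : ∀ i, 0 < i → i < p.length → P (p.getVert i)) {z : V} (hzv : z ≠ v) (hz : ¬ P z)
    {i : ℕ} (hi₀ : 0 < i) (hi : i < p.length) (hadj : G.Adj z (p.getVert i)) :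
    ∃ q : G.Walk z v, q.IsPath ∧ 2 ≤ q.length ∧ ∀ w ∈ q.support, w ≠ z → w ≠ v → P w := by
  have hdrop : ∀ w ∈ (p.drop i).support, w = v ∨ P w := by
    intro w hw
    obtain ⟨m, rfl, -⟩ := mem_support_iff_exists_getVert.1 hw
    rw [drop_getVert]
    rcases lt_or_ge (i + m) p.length with h | h
    · exact Or.inr (hint _ (by omega) h)
    · exact Or.inl (p.getVert_of_length_le h)
  refine ⟨cons hadj (p.drop i), (hp.drop i).cons fun hzs => (hdrop z hzs).elim hzv hz,
    by simp; omega, fun w hw hwz hwv => ?_⟩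
  rw [support_cons, List.mem_cons] at hw
  exact (hdrop w (hw.resolve_left hwz)).resolve_left hwv

end SimpleGraph.Walk

namespace IsCircleRep

variable {V : Type*} [DecidableEq V] {G : SimpleGraph V} {τ : List V}

theorem count_pos_of_walk (hτ : IsCircleRep G τ) {X K Y : List V} (hW : (X ++ K ++ Y) ~r τ)
    {u v : V} (p : G.Walk u v) (hp : 1 < p.length)
    (hK : ∀ i, 0 < i → i < p.length → 0 < K.count (p.getVert i) → K.count (p.getVert i) = 2)
    (h₁ : 0 < K.count (p.getVert 1)) : 0 < K.count u ∧ 0 < K.count v := by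
  have hall : ∀ i, 0 < i → i < p.length → K.count (p.getVert i) = 2 := by
    intro i hi₀ hi
    induction i with
    | zero => omega
    | succ i ih =>
      rcases Nat.eq_zero_or_pos i with rfl | hi'
      · exact hK 1 one_pos hi h₁
      · exact hK _ hi₀ hi
          (hτ.count_pos_of_adj hW (ih hi' (by omega)) (p.adj_getVert_succ (by omega)))
  constructor
  · simpa using hτ.count_pos_of_adj hW (hall 1 one_pos hp) (p.adj_getVert_succ (i := 0)
      (by omega)).symm
  · have := hτ.count_pos_of_adj hW (hall (p.length - 1) (by omega) (by omega))
      (p.adj_getVert_succ (i := p.length - 1) (by omega))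
    rwa [Nat.sub_add_cancel (by omega), p.getVert_length] at this

theorem exists_getVert_crossing (hτ : IsCircleRep G τ) {z b₁ b₂ : V} {R C D L : List V}
    (hW : (z :: R ++ b₁ :: C ++ z :: D ++ b₂ :: L) ~r τ) (hb₁ : G.Adj z b₁) (hb₂ : G.Adj z b₂)
    {u v : V} (huR : R.count u = 0) (huD : D.count u = 0) (hvC : C.count v = 0)
    (hvL : L.count v = 0) (p : G.Walk u v) (hp : 1 < p.length) :
    ∃ i, 0 < i ∧ i < p.length ∧ (p.getVert i = z ∨ G.Adj z (p.getVert i) ∨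
      G.Adj b₁ (p.getVert i) ∨ G.Adj b₂ (p.getVert i)) := by
  by_contra! h
  have hconf : ∀ i, 0 < i → i < p.length → R.count (p.getVert i) = 2 ∨
      C.count (p.getVert i) = 2 ∨ D.count (p.getVert i) = 2 ∨ L.count (p.getVert i) = 2 :=
    fun i hi₀ hi => have h := h i hi₀ hi
      hτ.count_eq_two_of_not_adj hW hb₁ hb₂ h.1 h.2.1 h.2.2.1 h.2.2.2
  have hsum : ∀ i, 0 < i → i < p.length → R.count (p.getVert i) + C.count (p.getVert i) +
      D.count (p.getVert i) + L.count (p.getVert i) = 2 := by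
    intro i hi₀ hi
    obtain ⟨hz, hzw, hb₁w, hb₂w⟩ := h i hi₀ hi
    have := hτ.count_eq_two_of_isRotated hW (p.getVert i)
    simp only [List.count_append, List.count_cons, beq_iff_eq, if_neg (Ne.symm hz),
      if_neg (fun e : b₁ = p.getVert i => hzw (e ▸ hb₁)),
      if_neg (fun e : b₂ = p.getVert i => hzw (e ▸ hb₂))] at this
    omega
  have hclosed : ∀ K ∈ [R, C, D, L], ∀ i, 0 < i → i < p.length →
      0 < K.count (p.getVert i) → K.count (p.getVert i) = 2 := by
    intro K hK i hi₀ hi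
    have := hsum i hi₀ hi
    simp only [List.mem_cons, List.not_mem_nil, or_false] at hK
    rcases hK with rfl | rfl | rfl | rfl <;> rcases hconf i hi₀ hi with h' | h' | h' | h' <;> omega
  rcases hconf 1 one_pos hp with h₁ | h₁ | h₁ | h₁
  · have := hτ.count_pos_of_walk (X := [z]) (by simpa using hW) p hp (hclosed R (by simp))
      (by omega)
    omega
  · have := hτ.count_pos_of_walk (X := z :: R ++ [b₁]) (by simpa using hW) p hp
      (hclosed C (by simp)) (by omega)
    omega
  · have := hτ.count_pos_of_walk (X := z :: R ++ b₁ :: C ++ [z]) (by simpa using hW) p hp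
      (hclosed D (by simp)) (by omega)
    omega
  · have := hτ.count_pos_of_walk (X := z :: R ++ b₁ :: C ++ z :: D ++ [b₂]) (Y := [])
      (by simpa using hW) p hp (hclosed L (by simp)) (by omega)
    omega

theorem exists_regions_of_block (hτ : IsCircleRep G τ) {p : V → Bool} {P Q N N' : List V}
    {z b₁ b₂ : V} (hF : (P ++ z :: Q ++ b₁ :: N) ~r τ.filter p) (hN : b₁ :: N = N' ++ [b₂])
    (hz : p z) (hzγ : (P ++ z :: Q).count z = 1) (hzb₁ : z ≠ b₁) (hzb₂ : z ≠ b₂) :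
    ∃ R C D L, (z :: R ++ b₁ :: C ++ z :: D ++ b₂ :: L) ~r τ ∧ R.filter p = Q ∧
      L.filter p = P := by
  have hzN : N.count z = 1 := by
    have h := hF.perm.count_eq z
    rw [List.count_filter hz, hτ.1 z] at h
    simp only [List.count_append, List.count_cons, beq_iff_eq, if_neg hzb₁.symm] at h hzγ
    omega
  obtain ⟨N₁, N₂, rfl⟩ := List.mem_iff_append.1 (List.count_pos_iff.1 (hzN ▸ one_pos))
  obtain ⟨M, rfl⟩ : ∃ M, N₂ = M ++ [b₂] := by
    rcases List.eq_nil_or_concat N₂ with rfl | ⟨M, c, rfl⟩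
    · have h := (List.append_inj' (by simpa using hN : (b₁ :: N₁) ++ [z] = N' ++ [b₂]) rfl).2
      exact absurd (List.singleton_inj.1 h) hzb₂
    · have h := List.append_inj' (by simpa using hN : (b₁ :: N₁ ++ z :: M) ++ [c] = N' ++ [b₂]) rfl
      exact ⟨M, by rw [List.singleton_inj.1 h.2, List.concat_eq_append]⟩
  have hF' : (P ++ (z :: Q ++ b₁ :: N₁ ++ z :: M ++ [b₂])) ~r τ.filter p := by
    simpa only [List.append_assoc, List.cons_append] using hF
  obtain ⟨R, C, D, L, hW, hR, -, -, hL⟩ := List.exists_regions_of_isRotated_filter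
    (R' := Q) (C' := N₁) (D' := M) (L' := P) (by
      simpa only [List.append_assoc, List.cons_append, List.nil_append] using
        List.isRotated_append.trans hF')
  exact ⟨R, C, D, L, hW, hR, hL⟩

end IsCircleRep

section Split

variable {V : Type*} [DecidableEq V] {G : SimpleGraph V} {A B SA SB : Finset V}

theorem SplitRel.symm {a b : V} (h : SplitRel G A B SA SB a b) : SplitRel G A B SA SB b a := by
  obtain ⟨ha, hb, ⟨hne, hnadj⟩ | ⟨p, hp, hl, hint⟩⟩ := h
  · exact ⟨hb, ha, Or.inl ⟨hne.symm, fun h => hnadj h.symm⟩⟩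
  · exact ⟨hb, ha, Or.inr ⟨p.reverse, hp.reverse, by simpa using hl,
      fun w hw hwb hwa => hint w (by simpa using hw) hwa hwb⟩⟩

theorem splitRel_swap : SplitRel G B A SB SA = SplitRel G A B SA SB := by
  unfold SplitRel
  rw [Finset.union_comm B A, Finset.union_comm SB SA]

theorem IsSplit.swap (h : IsSplit G A B SA SB) : IsSplit G B A SB SA := by
  obtain ⟨hcov, hAB, hASA, hASB, hBSA, hBSB, hSASB, hadj, hSA, hSB, hA, hB⟩ := h
  refine ⟨fun v => ?_, hAB.symm, hBSB, hBSA, hASB, hASA, hSASB.symm,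
    fun b hb a ha => (hadj a ha b hb).symm, hSB, hSA, hB, hA⟩
  have := hcov v
  simp only [Finset.mem_union] at this ⊢
  tauto

theorem IsClass.mem_of_splitRel {Φ : Set V} (hΦ : IsClass G A B SA SB Φ) {a b : V}
    (ha : a ∈ Φ) (hab : SplitRel G A B SA SB a b) : b ∈ Φ := by
  obtain ⟨x, -, rfl⟩ := hΦ
  exact ⟨hab.2.1, ha.2.trans _ _ _ (.rel _ _ hab)⟩

theorem IsClass.swap {Φ : Set V} (hΦ : IsClass G A B SA SB Φ) : IsClass G B A SB SA Φ := by
  rwa [IsClass, Finset.union_comm B A, splitRel_swap]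

theorem IsClass.eqvGen {Φ : Set V} (hΦ : IsClass G A B SA SB Φ) {a b : V} (ha : a ∈ Φ)
    (hb : b ∈ Φ) : Relation.EqvGen (SplitRel G A B SA SB) a b := by
  obtain ⟨x, -, rfl⟩ := hΦ
  exact ha.2.symm.trans _ _ _ hb.2

theorem IsClass.adj_of_not_mem {Φ : Set V} (hΦ : IsClass G A B SA SB Φ) {a z : V}
    (ha : a ∈ Φ) (hz : z ∉ Φ) (hzAB : z ∈ A ∪ B) : G.Adj z a := by
  have haAB : a ∈ A ∪ B := by obtain ⟨x, -, rfl⟩ := hΦ; exact ha.1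
  by_contra h
  exact hz (hΦ.mem_of_splitRel ha
    ⟨haAB, hzAB, Or.inl ⟨fun e => hz (e ▸ ha), fun h' => h h'.symm⟩⟩)

theorem IsClass.mem_of_forall_not_splitRel {Φ S : Set V} (hΦ : IsClass G A B SA SB Φ)
    (hS : ∀ a ∈ Φ, ∀ b ∈ Φ, a ∈ S → b ∉ S → ¬ SplitRel G A B SA SB a b) {a b : V}
    (ha : a ∈ Φ) (haS : a ∈ S) (hb : b ∈ Φ) : b ∈ S := by
  have hinv : ∀ c d, SplitRel G A B SA SB c d → (c ∈ Φ ∧ c ∈ S ↔ d ∈ Φ ∧ d ∈ S) := by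
    intro c d hcd
    constructor
    · rintro ⟨hc, hcS⟩
      have hd := hΦ.mem_of_splitRel hc hcd
      exact ⟨hd, by_contra fun hdS => hS c hc d hd hcS hdS hcd⟩
    · rintro ⟨hd, hdS⟩
      have hc := hΦ.mem_of_splitRel hd hcd.symm
      exact ⟨hc, by_contra fun hcS => hS d hd c hc hdS hcS hcd.symm⟩
  have hequiv : Equivalence fun c d : V => (c ∈ Φ ∧ c ∈ S ↔ d ∈ Φ ∧ d ∈ S) :=
    ⟨fun _ => Iff.rfl, Iff.symm, Iff.trans⟩
  exact (hequiv.eqvGen_iff.1 ((hΦ.eqvGen ha hb).mono hinv)).1 ⟨ha, haS⟩ |>.2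

theorem not_splitRel_of_separated (hsplit : IsSplit G A B SA SB) {τ : List V}
    (hτ : IsCircleRep G τ) {z b₁ b₂ u v : V} {R C D L : List V}
    (hW : (z :: R ++ b₁ :: C ++ z :: D ++ b₂ :: L) ~r τ) (hz : z ∈ A) (hb₁ : b₁ ∈ B)
    (hb₂ : b₂ ∈ B) (hu : u ∈ A) (hv : v ∈ A) (huC : C.count u = 1) (huL : L.count u = 1)
    (hvR : R.count v = 1) (hvD : D.count v = 1) (hzv : ¬ SplitRel G A B SA SB z v) :
    ¬ SplitRel G A B SA SB u v := by
  obtain ⟨-, hdAB, hdASA, hdASB, -, -, -, hadj, hSA, hSB, -, -⟩ := hsplit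
  have hne : ∀ a ∈ A, ∀ b ∈ B, a ≠ b := fun a ha b hb h =>
    Finset.disjoint_left.1 hdAB ha (h ▸ hb)
  have htot := hτ.count_eq_two_of_isRotated hW
  have hcount : ∀ w, w ≠ z → w ≠ b₁ → w ≠ b₂ →
      R.count w + C.count w + D.count w + L.count w = 2 := by
    intro w hwz hwb₁ hwb₂
    have := htot w
    simp only [List.count_append, List.count_cons, beq_iff_eq, if_neg hwz.symm,
      if_neg hwb₁.symm, if_neg hwb₂.symm] at this
    omega
  have hzR : R.count z = 0 ∧ C.count z = 0 := by
    have := htot z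
    simp only [List.count_append, List.count_cons, beq_self_eq_true, ↓reduceIte] at this
    omega
  have hzu : z ≠ u := by rintro rfl; omega
  have hzv' : z ≠ v := by rintro rfl; omega
  have hu' := hcount u hzu.symm (hne u hu b₁ hb₁) (hne u hu b₂ hb₂)
  have hv' := hcount v hzv'.symm (hne v hv b₁ hb₁) (hne v hv b₂ hb₂)
  have huv : u ≠ v := by rintro rfl; omega
  rintro ⟨-, -, ⟨-, hnadj⟩ | ⟨p, hp, hlen, hint⟩⟩
  · refine hnadj (hτ.adj_of_interleaved (X₁ := C) (X₂ := z :: D) (X₃ := b₂ :: L)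
      (X₄ := z :: R ++ [b₁]) ?_ huv huC ?_ ?_ ?_)
    · have h : ((z :: R ++ [b₁]) ++ (C ++ z :: D ++ b₂ :: L)) ~r τ := by simpa using hW
      simpa using List.isRotated_append.trans h
    all_goals simp [hzv', (hne u hu b₂ hb₂).symm, (hne v hv b₁ hb₁).symm, huL,
      hvD, hvR]
  · have hint' := fun i => hp.getVert_mem (P := (· ∈ SA ∪ SB)) hint (i := i)
    have hinSA := SimpleGraph.Walk.getVert_mem_of_not_adj hu hSB hint'
    have hz' : z ∉ SA ∪ SB := fun h => by
      rcases Finset.mem_union.1 h with h | h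
      · exact Finset.disjoint_left.1 hdASA hz h
      · exact Finset.disjoint_left.1 hdASB hz h
    obtain ⟨i, hi₀, hi, hcross⟩ := hτ.exists_getVert_crossing hW (hadj z hz b₁ hb₁)
      (hadj z hz b₂ hb₂) (by omega) (by omega) (by omega) (by omega) p (by omega)
    rcases hcross with h | h | h | h
    · exact hz' (h ▸ Finset.mem_union_left _ (hinSA i hi₀ hi))
    · obtain ⟨q, hq, hql, hqint⟩ := hp.exists_isPath_of_adj_getVert hint' hzv' hz' hi₀ hi h
      exact hzv ⟨Finset.mem_union_left _ hz, Finset.mem_union_left _ hv, Or.inr ⟨q, hq, hql, hqint⟩⟩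
    · exact hSA _ (hinSA i hi₀ hi) b₁ (Finset.mem_union_left _ hb₁) h.symm
    · exact hSA _ (hinSA i hi₀ hi) b₂ (Finset.mem_union_left _ hb₂) h.symm

end Split

section Class

variable {V : Type*} [DecidableEq V] {G : SimpleGraph V} {A B SA SB : Finset V}

theorem mem_of_between (hsplit : IsSplit G A B SA SB) {τ : List V} (hτ : IsCircleRep G τ)
    {P Q N N' : List V} {x z y b₁ b₂ : V}
    (hF : (P ++ z :: Q ++ b₁ :: N) ~r τ.filter (fun w => decide (w ∈ A ∪ B)))
    (hN : b₁ :: N = N' ++ [b₂]) (hγ : ∀ w ∈ P ++ z :: Q, w ∈ A) (hb₁ : b₁ ∈ B) (hb₂ : b₂ ∈ B)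
    {Φ : Set V} (hΦ : IsClass G A B SA SB Φ) (hocc : ∀ a ∈ Φ, a ∈ P ++ z :: Q)
    (hx : x ∈ Φ) (hxP : x ∈ P) (hy : y ∈ Φ) (hyQ : y ∈ Q) : z ∈ Φ := by
  by_contra hz
  have hadj := hsplit.2.2.2.2.2.2.2.1
  have hne : ∀ a ∈ A, ∀ b ∈ B, a ≠ b := fun a ha b hb h =>
    Finset.disjoint_left.1 hsplit.2.1 ha (h ▸ hb)
  have hzA := hγ z (by simp)
  have hone := hτ.count_le_one_of_forall_adj hF fun a ha => hadj a (hγ a ha) b₁ hb₁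
  obtain ⟨R, C, D, L, hW, hR, hL⟩ := hτ.exists_regions_of_block hF hN
    (decide_eq_true (Finset.mem_union_left _ hzA))
    (le_antisymm (hone z) (List.count_pos_iff.2 (by simp))) (hne z hzA b₁ hb₁) (hne z hzA b₂ hb₂)
  have hmem : ∀ a ∈ Φ, a ∈ A ∧ z ≠ a ∧ P.count a + Q.count a = 1 ∧ G.Adj z a := by
    intro a ha
    have hza : z ≠ a := fun h => hz (h ▸ ha)
    have hpos := List.count_pos_iff.2 (hocc a ha)
    have hle := hone a
    simp only [List.count_append, List.count_cons, beq_iff_eq, if_neg hza] at hpos hle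
    exact ⟨hγ a (hocc a ha), hza, by omega,
      hΦ.adj_of_not_mem ha hz (Finset.mem_union_left _ hzA)⟩
  have hpos : ∀ a ∈ Φ, R.count a = Q.count a ∧ C.count a = P.count a ∧
      D.count a = Q.count a ∧ L.count a = P.count a := by
    intro a ha
    obtain ⟨haA, hza, hPQ, hza'⟩ := hmem a ha
    have hfilter : ∀ K : List V, (K.filter fun w => decide (w ∈ A ∪ B)).count a = K.count a :=
      fun K => List.count_filter (decide_eq_true (Finset.mem_union_left _ haA))
    have hRa := hfilter R
    have hLa := hfilter L
    rw [hR] at hRa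
    rw [hL] at hLa
    have hzsees := (hτ.adj_iff_count_eq_one (X₀ := []) (X₁ := R ++ b₁ :: C) (X₂ := D ++ b₂ :: L)
      (by simpa using hW) hza).1 hza'
    have htot := hτ.count_eq_two_of_isRotated hW a
    simp only [List.count_append, List.count_cons, beq_iff_eq, if_neg hza,
      if_neg (hne a haA b₁ hb₁).symm, if_neg (hne a haA b₂ hb₂).symm] at hzsees htot
    omega
  have hsep : ∀ a ∈ Φ, ∀ b ∈ Φ, a ∈ {c | P.count c = 1} → b ∉ {c | P.count c = 1} →
      ¬ SplitRel G A B SA SB a b := by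
    intro a ha b hb hPa hPb
    have ha' := hpos a ha
    have hb' := hpos b hb
    have hQb := (hmem b hb).2.2.1
    simp only [Set.mem_ofPred_eq] at hPa hPb
    exact not_splitRel_of_separated hsplit hτ hW hzA hb₁ hb₂ (hmem a ha).1 (hmem b hb).1
      (by omega) (by omega) (by omega) (by omega)
      (fun h => hz (hΦ.mem_of_splitRel hb h.symm))
  have hPx := List.count_pos_iff.2 hxP
  have hQy := List.count_pos_iff.2 hyQ
  have hx' := (hmem x hx).2.2.1
  have hy' := (hmem y hy).2.2.1
  have hPy : P.count y = 1 := hΦ.mem_of_forall_not_splitRel hsep hx (show P.count x = 1 by omega) hy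
  omega

end Class

theorem class_contiguous_in_subword_general
    {V : Type*} [DecidableEq V]
    (G : SimpleGraph V)
    (A B SA SB : Finset V) (hsplit : IsSplit G A B SA SB)
    (τ : List V) (hτ : IsCircleRep G τ)
    (k : ℕ) (γ : ℕ → List V)
    (hjoin : ((List.range (2 * k)).map γ).flatten ~r
      τ.filter (fun x => decide (x ∈ A ∪ B)))
    (hne : ∀ i < 2 * k, γ i ≠ [])
    (hAword : ∀ i < 2 * k, i % 2 = 0 → ∀ x ∈ γ i, x ∈ A)
    (hBword : ∀ i < 2 * k, i % 2 = 1 → ∀ x ∈ γ i, x ∈ B)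
    (Φ : Set V) (hΦ : IsClass G A B SA SB Φ)
    (j : ℕ) (hj : j < 2 * k) (hocc : ∀ x ∈ Φ, x ∈ γ j) :
    ∀ (p q r s : List V) (x z y : V),
      γ j = p ++ x :: q ++ z :: r ++ y :: s → x ∈ Φ → y ∈ Φ → z ∈ Φ := by
  intro p q r s x z y hγj hx hy
  obtain ⟨b₁, b₂, N, N', hrot, hN, hb₁, hb₂⟩ :=
    List.exists_isRotated_flatten_map_range γ (by omega) hj hne
  rw [hγj] at hrot hocc
  have hF : ((p ++ x :: q) ++ z :: (r ++ y :: s) ++ b₁ :: N) ~r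
      τ.filter (fun x => decide (x ∈ A ∪ B)) := by
    simpa only [List.append_assoc, List.cons_append] using hrot.symm.trans hjoin
  have hocc' : ∀ a ∈ Φ, a ∈ (p ++ x :: q) ++ z :: (r ++ y :: s) := by simpa using hocc
  have hblock : ∀ w ∈ (p ++ x :: q) ++ z :: (r ++ y :: s), w ∈ γ j := by simp [hγj]
  have hpar : ∀ i, i % (2 * k) % 2 = i % 2 := fun i => Nat.mod_mod_of_dvd i (dvd_mul_right 2 k)
  have hlt : ∀ i, i % (2 * k) < 2 * k := fun i => Nat.mod_lt _ (by omega)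
  have hnext : (j + 1) % (2 * k) % 2 ≠ j % 2 := by rw [hpar]; omega
  have hprev : (j + (2 * k - 1)) % (2 * k) % 2 ≠ j % 2 := by rw [hpar]; omega
  rcases Nat.mod_two_eq_zero_or_one j with h | h
  · exact mem_of_between hsplit hτ hF hN (fun w hw => hAword j hj h w (hblock w hw))
      (hBword _ (hlt _) (by omega) b₁ hb₁) (hBword _ (hlt _) (by omega) b₂ hb₂) hΦ hocc' hx
      (by simp) hy (by simp)
  · rw [Finset.union_comm] at hF
    exact mem_of_between hsplit.swap hτ hF hN (fun w hw => hBword j hj h w (hblock w hw))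
      (hAword _ (hlt _) (by omega) b₁ hb₁) (hAword _ (hlt _) (by omega) b₂ hb₂) hΦ.swap
      hocc' hx (by simp) hy (by simp)

/-- The occurrences of the vertices of an equivalence class `Φ` of `∼` form a
contiguous subword of `γ j`: no symbol of `γ j` that does not belong to `Φ` lies
between two symbols of `Φ` in `γ j`. -/
theorem class_contiguous_in_subword
    {V : Type*} [DecidableEq V] [Fintype V]
    (G : SimpleGraph V) (hconn : G.Connected)
    (A B SA SB : Finset V) (hsplit : IsSplit G A B SA SB)
    (τ : List V) (hτ : IsCircleRep G τ)
    (k : ℕ) (γ : ℕ → List V)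
    (hjoin : ((List.range (2 * k)).map γ).flatten ~r
      τ.filter (fun x => decide (x ∈ A ∪ B)))
    (hne : ∀ i < 2 * k, γ i ≠ [])
    (hAword : ∀ i < 2 * k, i % 2 = 0 → ∀ x ∈ γ i, x ∈ A)
    (hBword : ∀ i < 2 * k, i % 2 = 1 → ∀ x ∈ γ i, x ∈ B)
    (Φ : Set V) (hΦ : IsClass G A B SA SB Φ)
    (j : ℕ) (hj : j < 2 * k) (hocc : ∀ x ∈ Φ, x ∈ γ j) :
    ∀ (p q r s : List V) (x z y : V),
      γ j = p ++ x :: q ++ z :: r ++ y :: s → x ∈ Φ → y ∈ Φ → z ∈ Φ :=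
  class_contiguous_in_subword_general G A B SA SB hsplit τ hτ k γ hjoin hne hAword hBword Φ hΦ j hj
    hocc
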